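/- On the reference triangle with vertices (0,0), (1,0), (0,1), the 10 functions consisting of the 3 sting functions S₁ = 560(1-x-y)³-630(1-x-y)²+180(1-x-y)-10, S₂ = 560x³-630x²+180x-10, S₃ = 560y³-630y²+180y-10, the 6 non-sting functions N₁¹, N₁², N₂¹, N₂², N₃¹, N₃² (given explicitly below), and the constant function 1, form a basis of the space of bivariate polynomials of total degree at most 3. -/
import Mathlib


open MvPolynomial

noncomputable section

local notation "x" => (X 0 : MvPolynomial (Fin 2) ℝ)
local notation "y" => (X 1 : MvPolynomial (Fin 2) ℝ)

/-- sting functions -/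
noncomputable def S₁ : MvPolynomial (Fin 2) ℝ :=
  560 * (1 - x - y) ^ 3 - 630 * (1 - x - y) ^ 2 + 180 * (1 - x - y) - 10
noncomputable def S₂ : MvPolynomial (Fin 2) ℝ := 560 * x ^ 3 - 630 * x ^ 2 + 180 * x - 10
noncomputable def S₃ : MvPolynomial (Fin 2) ℝ := 560 * y ^ 3 - 630 * y ^ 2 + 180 * y - 10

/-- non-sting functions -/
noncomputable def N₁₁ : MvPolynomial (Fin 2) ℝ :=
  C (1 / 3 : ℝ) * (-12 + 75 * x + 45 * y - 261 * x * y - 108 * x ^ 2 - 27 * y ^ 2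
    + 228 * x ^ 2 * y + 180 * x * y ^ 2 + 40 * x ^ 3 - 16 * y ^ 3)
noncomputable def N₁₂ : MvPolynomial (Fin 2) ℝ :=
  C (1 / 3 : ℝ) * (-12 + 45 * x + 75 * y - 261 * x * y - 27 * x ^ 2 - 108 * y ^ 2
    + 180 * x ^ 2 * y + 228 * x * y ^ 2 - 16 * x ^ 3 + 40 * y ^ 3)
noncomputable def N₂₁ : MvPolynomial (Fin 2) ℝ :=
  5 - 26 * x - 28 * y + 140 * x * y + 21 * x ^ 2 + 28 * y ^ 2
    - 112 * x ^ 2 * y - 112 * x * y ^ 2 + 8 * x ^ 3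
noncomputable def N₂₂ : MvPolynomial (Fin 2) ℝ :=
  C (1 / 3 : ℝ) * (-10 + 57 * x + 51 * y - 249 * x * y - 75 * x ^ 2 - 54 * y ^ 2
    + 228 * x ^ 2 * y + 180 * x * y ^ 2 + 16 * x ^ 3 + 8 * y ^ 3)
noncomputable def N₃₁ : MvPolynomial (Fin 2) ℝ :=
  C (1 / 3 : ℝ) * (-10 + 51 * x + 57 * y - 249 * x * y - 54 * x ^ 2 - 75 * y ^ 2
    + 180 * x ^ 2 * y + 228 * x * y ^ 2 + 8 * x ^ 3 + 16 * y ^ 3)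
noncomputable def N₃₂ : MvPolynomial (Fin 2) ℝ :=
  5 - 28 * x - 26 * y + 140 * x * y + 28 * x ^ 2 + 21 * y ^ 2
    - 112 * x ^ 2 * y - 112 * x * y ^ 2 + 8 * y ^ 3

/-- the ten functions: 3 sting, 6 non-sting, and the constant 1 -/
noncomputable def tenFunctions : Fin 10 → MvPolynomial (Fin 2) ℝ :=
  ![S₁, S₂, S₃, N₁₁, N₁₂, N₂₁, N₂₂, N₃₁, N₃₂, 1]

lemma hC : (C (1 / 3 : ℝ) : MvPolynomial (Fin 2) ℝ) * 3 = 1 := by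
  rw [show ((3 : MvPolynomial (Fin 2) ℝ)) = C 3 from (map_ofNat C 3).symm, ← C_mul]
  norm_num

lemma fwd0 : S₁ = (100 : ℝ) • (x ^ 0 * y ^ 0) + (-600 : ℝ) • (x ^ 1 * y ^ 0) + (-600 : ℝ) • (x ^ 0 * y ^ 1) + (1050 : ℝ) • (x ^ 2 * y ^ 0) + (2100 : ℝ) • (x ^ 1 * y ^ 1) + (1050 : ℝ) • (x ^ 0 * y ^ 2) + (-560 : ℝ) • (x ^ 3 * y ^ 0) + (-1680 : ℝ) • (x ^ 2 * y ^ 1) + (-1680 : ℝ) • (x ^ 1 * y ^ 2) + (-560 : ℝ) • (x ^ 0 * y ^ 3) := by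
  simp only [S₁, S₂, S₃, N₁₁, N₁₂, N₂₁, N₂₂, N₃₁, N₃₂, smul_eq_C_mul, map_ofNat, map_neg, map_one, map_zero]
  ring

lemma fwd1 : S₂ = (-10 : ℝ) • (x ^ 0 * y ^ 0) + (180 : ℝ) • (x ^ 1 * y ^ 0) + (0 : ℝ) • (x ^ 0 * y ^ 1) + (-630 : ℝ) • (x ^ 2 * y ^ 0) + (0 : ℝ) • (x ^ 1 * y ^ 1) + (0 : ℝ) • (x ^ 0 * y ^ 2) + (560 : ℝ) • (x ^ 3 * y ^ 0) + (0 : ℝ) • (x ^ 2 * y ^ 1) + (0 : ℝ) • (x ^ 1 * y ^ 2) + (0 : ℝ) • (x ^ 0 * y ^ 3) := by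
  simp only [S₁, S₂, S₃, N₁₁, N₁₂, N₂₁, N₂₂, N₃₁, N₃₂, smul_eq_C_mul, map_ofNat, map_neg, map_one, map_zero]
  ring

lemma fwd2 : S₃ = (-10 : ℝ) • (x ^ 0 * y ^ 0) + (0 : ℝ) • (x ^ 1 * y ^ 0) + (180 : ℝ) • (x ^ 0 * y ^ 1) + (0 : ℝ) • (x ^ 2 * y ^ 0) + (0 : ℝ) • (x ^ 1 * y ^ 1) + (-630 : ℝ) • (x ^ 0 * y ^ 2) + (0 : ℝ) • (x ^ 3 * y ^ 0) + (0 : ℝ) • (x ^ 2 * y ^ 1) + (0 : ℝ) • (x ^ 1 * y ^ 2) + (560 : ℝ) • (x ^ 0 * y ^ 3) := by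
  simp only [S₁, S₂, S₃, N₁₁, N₁₂, N₂₁, N₂₂, N₃₁, N₃₂, smul_eq_C_mul, map_ofNat, map_neg, map_one, map_zero]
  ring

lemma fwd3 : (3 : ℝ) • N₁₁ = (-12 : ℝ) • (x ^ 0 * y ^ 0) + (75 : ℝ) • (x ^ 1 * y ^ 0) + (45 : ℝ) • (x ^ 0 * y ^ 1) + (-108 : ℝ) • (x ^ 2 * y ^ 0) + (-261 : ℝ) • (x ^ 1 * y ^ 1) + (-27 : ℝ) • (x ^ 0 * y ^ 2) + (40 : ℝ) • (x ^ 3 * y ^ 0) + (228 : ℝ) • (x ^ 2 * y ^ 1) + (180 : ℝ) • (x ^ 1 * y ^ 2) + (-16 : ℝ) • (x ^ 0 * y ^ 3) := by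
  simp only [S₁, S₂, S₃, N₁₁, N₁₂, N₂₁, N₂₂, N₃₁, N₃₂, smul_eq_C_mul, map_ofNat, map_neg, map_one, map_zero]
  linear_combination ((-12) + (45) * y + (-27) * y ^ 2 + (-16) * y ^ 3 + (75) * x + (-261) * x * y + (180) * x * y ^ 2 + (-108) * x ^ 2 + (228) * x ^ 2 * y + (40) * x ^ 3) * hC

lemma fwd4 : (3 : ℝ) • N₁₂ = (-12 : ℝ) • (x ^ 0 * y ^ 0) + (45 : ℝ) • (x ^ 1 * y ^ 0) + (75 : ℝ) • (x ^ 0 * y ^ 1) + (-27 : ℝ) • (x ^ 2 * y ^ 0) + (-261 : ℝ) • (x ^ 1 * y ^ 1) + (-108 : ℝ) • (x ^ 0 * y ^ 2) + (-16 : ℝ) • (x ^ 3 * y ^ 0) + (180 : ℝ) • (x ^ 2 * y ^ 1) + (228 : ℝ) • (x ^ 1 * y ^ 2) + (40 : ℝ) • (x ^ 0 * y ^ 3) := by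
  simp only [S₁, S₂, S₃, N₁₁, N₁₂, N₂₁, N₂₂, N₃₁, N₃₂, smul_eq_C_mul, map_ofNat, map_neg, map_one, map_zero]
  linear_combination ((-12) + (75) * y + (-108) * y ^ 2 + (40) * y ^ 3 + (45) * x + (-261) * x * y + (228) * x * y ^ 2 + (-27) * x ^ 2 + (180) * x ^ 2 * y + (-16) * x ^ 3) * hC

lemma fwd5 : N₂₁ = (5 : ℝ) • (x ^ 0 * y ^ 0) + (-26 : ℝ) • (x ^ 1 * y ^ 0) + (-28 : ℝ) • (x ^ 0 * y ^ 1) + (21 : ℝ) • (x ^ 2 * y ^ 0) + (140 : ℝ) • (x ^ 1 * y ^ 1) + (28 : ℝ) • (x ^ 0 * y ^ 2) + (8 : ℝ) • (x ^ 3 * y ^ 0) + (-112 : ℝ) • (x ^ 2 * y ^ 1) + (-112 : ℝ) • (x ^ 1 * y ^ 2) + (0 : ℝ) • (x ^ 0 * y ^ 3) := by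
  simp only [S₁, S₂, S₃, N₁₁, N₁₂, N₂₁, N₂₂, N₃₁, N₃₂, smul_eq_C_mul, map_ofNat, map_neg, map_one, map_zero]
  ring

lemma fwd6 : (3 : ℝ) • N₂₂ = (-10 : ℝ) • (x ^ 0 * y ^ 0) + (57 : ℝ) • (x ^ 1 * y ^ 0) + (51 : ℝ) • (x ^ 0 * y ^ 1) + (-75 : ℝ) • (x ^ 2 * y ^ 0) + (-249 : ℝ) • (x ^ 1 * y ^ 1) + (-54 : ℝ) • (x ^ 0 * y ^ 2) + (16 : ℝ) • (x ^ 3 * y ^ 0) + (228 : ℝ) • (x ^ 2 * y ^ 1) + (180 : ℝ) • (x ^ 1 * y ^ 2) + (8 : ℝ) • (x ^ 0 * y ^ 3) := by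
  simp only [S₁, S₂, S₃, N₁₁, N₁₂, N₂₁, N₂₂, N₃₁, N₃₂, smul_eq_C_mul, map_ofNat, map_neg, map_one, map_zero]
  linear_combination ((-10) + (51) * y + (-54) * y ^ 2 + (8) * y ^ 3 + (57) * x + (-249) * x * y + (180) * x * y ^ 2 + (-75) * x ^ 2 + (228) * x ^ 2 * y + (16) * x ^ 3) * hC

lemma fwd7 : (3 : ℝ) • N₃₁ = (-10 : ℝ) • (x ^ 0 * y ^ 0) + (51 : ℝ) • (x ^ 1 * y ^ 0) + (57 : ℝ) • (x ^ 0 * y ^ 1) + (-54 : ℝ) • (x ^ 2 * y ^ 0) + (-249 : ℝ) • (x ^ 1 * y ^ 1) + (-75 : ℝ) • (x ^ 0 * y ^ 2) + (8 : ℝ) • (x ^ 3 * y ^ 0) + (180 : ℝ) • (x ^ 2 * y ^ 1) + (228 : ℝ) • (x ^ 1 * y ^ 2) + (16 : ℝ) • (x ^ 0 * y ^ 3) := by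
  simp only [S₁, S₂, S₃, N₁₁, N₁₂, N₂₁, N₂₂, N₃₁, N₃₂, smul_eq_C_mul, map_ofNat, map_neg, map_one, map_zero]
  linear_combination ((-10) + (57) * y + (-75) * y ^ 2 + (16) * y ^ 3 + (51) * x + (-249) * x * y + (228) * x * y ^ 2 + (-54) * x ^ 2 + (180) * x ^ 2 * y + (8) * x ^ 3) * hC

lemma fwd8 : N₃₂ = (5 : ℝ) • (x ^ 0 * y ^ 0) + (-28 : ℝ) • (x ^ 1 * y ^ 0) + (-26 : ℝ) • (x ^ 0 * y ^ 1) + (28 : ℝ) • (x ^ 2 * y ^ 0) + (140 : ℝ) • (x ^ 1 * y ^ 1) + (21 : ℝ) • (x ^ 0 * y ^ 2) + (0 : ℝ) • (x ^ 3 * y ^ 0) + (-112 : ℝ) • (x ^ 2 * y ^ 1) + (-112 : ℝ) • (x ^ 1 * y ^ 2) + (8 : ℝ) • (x ^ 0 * y ^ 3) := by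
  simp only [S₁, S₂, S₃, N₁₁, N₁₂, N₂₁, N₂₂, N₃₁, N₃₂, smul_eq_C_mul, map_ofNat, map_neg, map_one, map_zero]
  ring

lemma bwd0 : (1 : ℝ) • (x ^ 0 * y ^ 0) = (0 : ℝ) • S₁ + (0 : ℝ) • S₂ + (0 : ℝ) • S₃ + (0 : ℝ) • N₁₁ + (0 : ℝ) • N₁₂ + (0 : ℝ) • N₂₁ + (0 : ℝ) • N₂₂ + (0 : ℝ) • N₃₁ + (0 : ℝ) • N₃₂ + (1 : ℝ) • (1 : MvPolynomial (Fin 2) ℝ) := by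
  simp only [S₁, S₂, S₃, N₁₁, N₁₂, N₂₁, N₂₂, N₃₁, N₃₂, smul_eq_C_mul, map_ofNat, map_neg, map_one, map_zero]
  ring

lemma bwd1 : (480 : ℝ) • (x ^ 1 * y ^ 0) = (3 : ℝ) • S₁ + (-6 : ℝ) • S₂ + (3 : ℝ) • S₃ + (210 : ℝ) • N₁₁ + (0 : ℝ) • N₁₂ + (210 : ℝ) • N₂₁ + (0 : ℝ) • N₂₂ + (210 : ℝ) • N₃₁ + (0 : ℝ) • N₃₂ + (160 : ℝ) • (1 : MvPolynomial (Fin 2) ℝ) := by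
  simp only [S₁, S₂, S₃, N₁₁, N₁₂, N₂₁, N₂₂, N₃₁, N₃₂, smul_eq_C_mul, map_ofNat, map_neg, map_one, map_zero]
  linear_combination ((1540) + (-7140) * y + (7140) * y ^ 2 + (-8820) * x + (35700) * x * y + (-28560) * x * y ^ 2 + (11340) * x ^ 2 + (-28560) * x ^ 2 * y + (-3360) * x ^ 3) * hC

lemma bwd2 : (480 : ℝ) • (x ^ 0 * y ^ 1) = (3 : ℝ) • S₁ + (3 : ℝ) • S₂ + (-6 : ℝ) • S₃ + (0 : ℝ) • N₁₁ + (210 : ℝ) • N₁₂ + (0 : ℝ) • N₂₁ + (210 : ℝ) • N₂₂ + (0 : ℝ) • N₃₁ + (210 : ℝ) • N₃₂ + (160 : ℝ) • (1 : MvPolynomial (Fin 2) ℝ) := by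
  simp only [S₁, S₂, S₃, N₁₁, N₁₂, N₂₁, N₂₂, N₃₁, N₃₂, smul_eq_C_mul, map_ofNat, map_neg, map_one, map_zero]
  linear_combination ((1540) + (-8820) * y + (11340) * y ^ 2 + (-3360) * y ^ 3 + (-7140) * x + (35700) * x * y + (-28560) * x * y ^ 2 + (7140) * x ^ 2 + (-28560) * x ^ 2 * y) * hC

lemma bwd3 : (1680 : ℝ) • (x ^ 2 * y ^ 0) = (-53 : ℝ) • S₁ + (-74 : ℝ) • S₂ + (-53 : ℝ) • S₃ + (210 : ℝ) • N₁₁ + (0 : ℝ) • N₁₂ + (1050 : ℝ) • N₂₁ + (0 : ℝ) • N₂₂ + (210 : ℝ) • N₃₁ + (0 : ℝ) • N₃₂ + (320 : ℝ) • (1 : MvPolynomial (Fin 2) ℝ) := by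
  simp only [S₁, S₂, S₃, N₁₁, N₁₂, N₂₁, N₂₂, N₃₁, N₃₂, smul_eq_C_mul, map_ofNat, map_neg, map_one, map_zero]
  linear_combination ((1540) + (-7140) * y + (7140) * y ^ 2 + (-8820) * x + (35700) * x * y + (-28560) * x * y ^ 2 + (11340) * x ^ 2 + (-28560) * x ^ 2 * y + (-3360) * x ^ 3) * hC

lemma bwd4 : (3360 : ℝ) • (x ^ 1 * y ^ 1) = (74 : ℝ) • S₁ + (53 : ℝ) • S₂ + (53 : ℝ) • S₃ + (210 : ℝ) • N₁₁ + (210 : ℝ) • N₁₂ + (210 : ℝ) • N₂₁ + (1050 : ℝ) • N₂₂ + (1050 : ℝ) • N₃₁ + (210 : ℝ) • N₃₂ + (240 : ℝ) • (1 : MvPolynomial (Fin 2) ℝ) := by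
  simp only [S₁, S₂, S₃, N₁₁, N₁₂, N₂₁, N₂₂, N₃₁, N₃₂, smul_eq_C_mul, map_ofNat, map_neg, map_one, map_zero]
  linear_combination ((8680) + (-46200) * y + (54600) * y ^ 2 + (-10080) * y ^ 3 + (-46200) * x + (210840) * x * y + (-171360) * x * y ^ 2 + (54600) * x ^ 2 + (-171360) * x ^ 2 * y + (-10080) * x ^ 3) * hC

lemma bwd5 : (1680 : ℝ) • (x ^ 0 * y ^ 2) = (-53 : ℝ) • S₁ + (-53 : ℝ) • S₂ + (-74 : ℝ) • S₃ + (0 : ℝ) • N₁₁ + (210 : ℝ) • N₁₂ + (0 : ℝ) • N₂₁ + (210 : ℝ) • N₂₂ + (0 : ℝ) • N₃₁ + (1050 : ℝ) • N₃₂ + (320 : ℝ) • (1 : MvPolynomial (Fin 2) ℝ) := by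
  simp only [S₁, S₂, S₃, N₁₁, N₁₂, N₂₁, N₂₂, N₃₁, N₃₂, smul_eq_C_mul, map_ofNat, map_neg, map_one, map_zero]
  linear_combination ((1540) + (-8820) * y + (11340) * y ^ 2 + (-3360) * y ^ 3 + (-7140) * x + (35700) * x * y + (-28560) * x * y ^ 2 + (7140) * x ^ 2 + (-28560) * x ^ 2 * y) * hC

lemma bwd6 : (160 : ℝ) • (x ^ 3 * y ^ 0) = (-6 : ℝ) • S₁ + (-7 : ℝ) • S₂ + (-6 : ℝ) • S₃ + (0 : ℝ) • N₁₁ + (0 : ℝ) • N₁₂ + (90 : ℝ) • N₂₁ + (0 : ℝ) • N₂₂ + (0 : ℝ) • N₃₁ + (0 : ℝ) • N₃₂ + (20 : ℝ) • (1 : MvPolynomial (Fin 2) ℝ) := by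
  simp only [S₁, S₂, S₃, N₁₁, N₁₂, N₂₁, N₂₂, N₃₁, N₃₂, smul_eq_C_mul, map_ofNat, map_neg, map_one, map_zero]
  ring

lemma bwd7 : (6720 : ℝ) • (x ^ 2 * y ^ 1) = (27 : ℝ) • S₁ + (-1 : ℝ) • S₂ + (13 : ℝ) • S₃ + (0 : ℝ) • N₁₁ + (0 : ℝ) • N₁₂ + (840 : ℝ) • N₂₁ + (1260 : ℝ) • N₂₂ + (840 : ℝ) • N₃₁ + (0 : ℝ) • N₃₂ + (220 : ℝ) • (1 : MvPolynomial (Fin 2) ℝ) := by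
  simp only [S₁, S₂, S₃, N₁₁, N₁₂, N₂₁, N₂₂, N₃₁, N₃₂, smul_eq_C_mul, map_ofNat, map_neg, map_one, map_zero]
  linear_combination ((7000) + (-37380) * y + (43680) * y ^ 2 + (-7840) * y ^ 3 + (-38220) * x + (174300) * x * y + (-139440) * x * y ^ 2 + (46620) * x ^ 2 + (-146160) * x ^ 2 * y + (-8960) * x ^ 3) * hC

lemma bwd8 : (6720 : ℝ) • (x ^ 1 * y ^ 2) = (27 : ℝ) • S₁ + (13 : ℝ) • S₂ + (-1 : ℝ) • S₃ + (0 : ℝ) • N₁₁ + (0 : ℝ) • N₁₂ + (0 : ℝ) • N₂₁ + (840 : ℝ) • N₂₂ + (1260 : ℝ) • N₃₁ + (840 : ℝ) • N₃₂ + (220 : ℝ) • (1 : MvPolynomial (Fin 2) ℝ) := by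
  simp only [S₁, S₂, S₃, N₁₁, N₁₂, N₂₁, N₂₂, N₃₁, N₃₂, smul_eq_C_mul, map_ofNat, map_neg, map_one, map_zero]
  linear_combination ((7000) + (-38220) * y + (46620) * y ^ 2 + (-8960) * y ^ 3 + (-37380) * x + (174300) * x * y + (-146160) * x * y ^ 2 + (43680) * x ^ 2 + (-139440) * x ^ 2 * y + (-7840) * x ^ 3) * hC

lemma bwd9 : (160 : ℝ) • (x ^ 0 * y ^ 3) = (-6 : ℝ) • S₁ + (-6 : ℝ) • S₂ + (-7 : ℝ) • S₃ + (0 : ℝ) • N₁₁ + (0 : ℝ) • N₁₂ + (0 : ℝ) • N₂₁ + (0 : ℝ) • N₂₂ + (0 : ℝ) • N₃₁ + (90 : ℝ) • N₃₂ + (20 : ℝ) • (1 : MvPolynomial (Fin 2) ℝ) := by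
  simp only [S₁, S₂, S₃, N₁₁, N₁₂, N₂₁, N₂₂, N₃₁, N₃₂, smul_eq_C_mul, map_ofNat, map_neg, map_one, map_zero]
  ring

lemma mem_comb (a0 a1 a2 a3 a4 a5 a6 a7 a8 a9 : ℝ) :
    a0 • S₁ + a1 • S₂ + a2 • S₃ + a3 • N₁₁ + a4 • N₁₂ + a5 • N₂₁ + a6 • N₂₂ + a7 • N₃₁ + a8 • N₃₂ + a9 • (1 : MvPolynomial (Fin 2) ℝ) ∈ Submodule.span ℝ (Set.range tenFunctions) := by
  have h : ∀ i : Fin 10, tenFunctions i ∈ Submodule.span ℝ (Set.range tenFunctions) :=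
    fun i => Submodule.subset_span ⟨i, rfl⟩
  exact add_mem (add_mem (add_mem (add_mem (add_mem (add_mem (add_mem (add_mem (add_mem (Submodule.smul_mem _ _ (h 0)) (Submodule.smul_mem _ _ (h 1))) (Submodule.smul_mem _ _ (h 2))) (Submodule.smul_mem _ _ (h 3))) (Submodule.smul_mem _ _ (h 4))) (Submodule.smul_mem _ _ (h 5))) (Submodule.smul_mem _ _ (h 6))) (Submodule.smul_mem _ _ (h 7))) (Submodule.smul_mem _ _ (h 8))) (Submodule.smul_mem _ _ (h 9))

lemma mono_rtd (i j : ℕ) (h : i + j ≤ 3) :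
    (x ^ i * y ^ j : MvPolynomial (Fin 2) ℝ) ∈ restrictTotalDegree (Fin 2) ℝ 3 := by
  rw [mem_restrictTotalDegree]
  calc (x ^ i * y ^ j : MvPolynomial (Fin 2) ℝ).totalDegree
      ≤ (x ^ i : MvPolynomial (Fin 2) ℝ).totalDegree + (y ^ j : MvPolynomial (Fin 2) ℝ).totalDegree :=
        totalDegree_mul _ _
    _ ≤ i + j := by rw [totalDegree_X_pow, totalDegree_X_pow]
    _ ≤ 3 := h

lemma combM_rtd (a0 a1 a2 a3 a4 a5 a6 a7 a8 a9 : ℝ) :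
    a0 • (x ^ 0 * y ^ 0) + a1 • (x ^ 1 * y ^ 0) + a2 • (x ^ 0 * y ^ 1) + a3 • (x ^ 2 * y ^ 0) + a4 • (x ^ 1 * y ^ 1) + a5 • (x ^ 0 * y ^ 2) + a6 • (x ^ 3 * y ^ 0) + a7 • (x ^ 2 * y ^ 1) + a8 • (x ^ 1 * y ^ 2) + a9 • (x ^ 0 * y ^ 3) ∈ restrictTotalDegree (Fin 2) ℝ 3 := by
  exact add_mem (add_mem (add_mem (add_mem (add_mem (add_mem (add_mem (add_mem (add_mem (Submodule.smul_mem _ _ (mono_rtd 0 0 (by norm_num))) (Submodule.smul_mem _ _ (mono_rtd 1 0 (by norm_num)))) (Submodule.smul_mem _ _ (mono_rtd 0 1 (by norm_num)))) (Submodule.smul_mem _ _ (mono_rtd 2 0 (by norm_num)))) (Submodule.smul_mem _ _ (mono_rtd 1 1 (by norm_num)))) (Submodule.smul_mem _ _ (mono_rtd 0 2 (by norm_num)))) (Submodule.smul_mem _ _ (mono_rtd 3 0 (by norm_num)))) (Submodule.smul_mem _ _ (mono_rtd 2 1 (by norm_num)))) (Submodule.smul_mem _ _ (mono_rtd 1 2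 (by norm_num)))) (Submodule.smul_mem _ _ (mono_rtd 0 3 (by norm_num)))

lemma memM0 : (x ^ 0 * y ^ 0 : MvPolynomial (Fin 2) ℝ) ∈ Submodule.span ℝ (Set.range tenFunctions) := by
  rw [← Submodule.smul_mem_iff _ (show ((1 : ℝ)) ≠ 0 by norm_num)]
  rw [bwd0]
  exact mem_comb _ _ _ _ _ _ _ _ _ _

lemma memM1 : (x ^ 1 * y ^ 0 : MvPolynomial (Fin 2) ℝ) ∈ Submodule.span ℝ (Set.range tenFunctions) := by
  rw [← Submodule.smul_mem_iff _ (show ((480 : ℝ)) ≠ 0 by norm_num)]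
  rw [bwd1]
  exact mem_comb _ _ _ _ _ _ _ _ _ _

lemma memM2 : (x ^ 0 * y ^ 1 : MvPolynomial (Fin 2) ℝ) ∈ Submodule.span ℝ (Set.range tenFunctions) := by
  rw [← Submodule.smul_mem_iff _ (show ((480 : ℝ)) ≠ 0 by norm_num)]
  rw [bwd2]
  exact mem_comb _ _ _ _ _ _ _ _ _ _

lemma memM3 : (x ^ 2 * y ^ 0 : MvPolynomial (Fin 2) ℝ) ∈ Submodule.span ℝ (Set.range tenFunctions) := by
  rw [← Submodule.smul_mem_iff _ (show ((1680 : ℝ)) ≠ 0 by norm_num)]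
  rw [bwd3]
  exact mem_comb _ _ _ _ _ _ _ _ _ _

lemma memM4 : (x ^ 1 * y ^ 1 : MvPolynomial (Fin 2) ℝ) ∈ Submodule.span ℝ (Set.range tenFunctions) := by
  rw [← Submodule.smul_mem_iff _ (show ((3360 : ℝ)) ≠ 0 by norm_num)]
  rw [bwd4]
  exact mem_comb _ _ _ _ _ _ _ _ _ _

lemma memM5 : (x ^ 0 * y ^ 2 : MvPolynomial (Fin 2) ℝ) ∈ Submodule.span ℝ (Set.range tenFunctions) := by
  rw [← Submodule.smul_mem_iff _ (show ((1680 : ℝ)) ≠ 0 by norm_num)]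
  rw [bwd5]
  exact mem_comb _ _ _ _ _ _ _ _ _ _

lemma memM6 : (x ^ 3 * y ^ 0 : MvPolynomial (Fin 2) ℝ) ∈ Submodule.span ℝ (Set.range tenFunctions) := by
  rw [← Submodule.smul_mem_iff _ (show ((160 : ℝ)) ≠ 0 by norm_num)]
  rw [bwd6]
  exact mem_comb _ _ _ _ _ _ _ _ _ _

lemma memM7 : (x ^ 2 * y ^ 1 : MvPolynomial (Fin 2) ℝ) ∈ Submodule.span ℝ (Set.range tenFunctions) := by
  rw [← Submodule.smul_mem_iff _ (show ((6720 : ℝ)) ≠ 0 by norm_num)]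
  rw [bwd7]
  exact mem_comb _ _ _ _ _ _ _ _ _ _

lemma memM8 : (x ^ 1 * y ^ 2 : MvPolynomial (Fin 2) ℝ) ∈ Submodule.span ℝ (Set.range tenFunctions) := by
  rw [← Submodule.smul_mem_iff _ (show ((6720 : ℝ)) ≠ 0 by norm_num)]
  rw [bwd8]
  exact mem_comb _ _ _ _ _ _ _ _ _ _

lemma memM9 : (x ^ 0 * y ^ 3 : MvPolynomial (Fin 2) ℝ) ∈ Submodule.span ℝ (Set.range tenFunctions) := by
  rw [← Submodule.smul_mem_iff _ (show ((160 : ℝ)) ≠ 0 by norm_num)]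
  rw [bwd9]
  exact mem_comb _ _ _ _ _ _ _ _ _ _

lemma rtd0 : S₁ ∈ restrictTotalDegree (Fin 2) ℝ 3 := by
  rw [fwd0]
  exact combM_rtd _ _ _ _ _ _ _ _ _ _

lemma rtd1 : S₂ ∈ restrictTotalDegree (Fin 2) ℝ 3 := by
  rw [fwd1]
  exact combM_rtd _ _ _ _ _ _ _ _ _ _

lemma rtd2 : S₃ ∈ restrictTotalDegree (Fin 2) ℝ 3 := by
  rw [fwd2]
  exact combM_rtd _ _ _ _ _ _ _ _ _ _

lemma rtd3 : N₁₁ ∈ restrictTotalDegree (Fin 2) ℝ 3 := by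
  rw [← Submodule.smul_mem_iff _ (show ((3 : ℝ)) ≠ 0 by norm_num)]
  rw [fwd3]
  exact combM_rtd _ _ _ _ _ _ _ _ _ _

lemma rtd4 : N₁₂ ∈ restrictTotalDegree (Fin 2) ℝ 3 := by
  rw [← Submodule.smul_mem_iff _ (show ((3 : ℝ)) ≠ 0 by norm_num)]
  rw [fwd4]
  exact combM_rtd _ _ _ _ _ _ _ _ _ _

lemma rtd5 : N₂₁ ∈ restrictTotalDegree (Fin 2) ℝ 3 := by
  rw [fwd5]
  exact combM_rtd _ _ _ _ _ _ _ _ _ _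

lemma rtd6 : N₂₂ ∈ restrictTotalDegree (Fin 2) ℝ 3 := by
  rw [← Submodule.smul_mem_iff _ (show ((3 : ℝ)) ≠ 0 by norm_num)]
  rw [fwd6]
  exact combM_rtd _ _ _ _ _ _ _ _ _ _

lemma rtd7 : N₃₁ ∈ restrictTotalDegree (Fin 2) ℝ 3 := by
  rw [← Submodule.smul_mem_iff _ (show ((3 : ℝ)) ≠ 0 by norm_num)]
  rw [fwd7]
  exact combM_rtd _ _ _ _ _ _ _ _ _ _

lemma rtd8 : N₃₂ ∈ restrictTotalDegree (Fin 2) ℝ 3 := by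
  rw [fwd8]
  exact combM_rtd _ _ _ _ _ _ _ _ _ _

lemma rtd9 : (1 : MvPolynomial (Fin 2) ℝ) ∈ restrictTotalDegree (Fin 2) ℝ 3 := by
  rw [mem_restrictTotalDegree, totalDegree_one]
  norm_num

lemma my_sum_univ_nine {M : Type*} [AddCommMonoid M] (f : Fin 9 → M) :
    ∑ i, f i = f 0 + f 1 + f 2 + f 3 + f 4 + f 5 + f 6 + f 7 + f 8 := by
  rw [Fin.sum_univ_castSucc, Fin.sum_univ_eight]
  rfl

lemma my_sum_univ_ten {M : Type*} [AddCommMonoid M] (f : Fin 10 → M) :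
    ∑ i, f i = f 0 + f 1 + f 2 + f 3 + f 4 + f 5 + f 6 + f 7 + f 8 + f 9 := by
  rw [Fin.sum_univ_castSucc, my_sum_univ_nine]
  rfl

set_option maxHeartbeats 2000000 in
lemma indep : LinearIndependent ℝ tenFunctions := by
  rw [Fintype.linearIndependent_iff]
  intro g hg
  rw [my_sum_univ_ten] at hg
  simp only [show tenFunctions 0 = S₁ from rfl, show tenFunctions 1 = S₂ from rfl,
    show tenFunctions 2 = S₃ from rfl, show tenFunctions 3 = N₁₁ from rfl,
    show tenFunctions 4 = N₁₂ from rfl, show tenFunctions 5 = N₂₁ from rfl,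
    show tenFunctions 6 = N₂₂ from rfl, show tenFunctions 7 = N₃₁ from rfl,
    show tenFunctions 8 = N₃₂ from rfl, show tenFunctions 9 = (1 : MvPolynomial (Fin 2) ℝ) from rfl] at hg
  have h0 := congrArg (eval (![(3 : ℝ), (2 : ℝ)] : Fin 2 → ℝ)) hg
  have h1 := congrArg (eval (![(1 : ℝ), (0 : ℝ)] : Fin 2 → ℝ)) hg
  have h2 := congrArg (eval (![(2 : ℝ), (3 : ℝ)] : Fin 2 → ℝ)) hg
  have h3 := congrArg (eval (![(3 : ℝ), (0 : ℝ)] : Fin 2 → ℝ)) hg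
  have h4 := congrArg (eval (![(0 : ℝ), (3 : ℝ)] : Fin 2 → ℝ)) hg
  have h5 := congrArg (eval (![(2 : ℝ), (1 : ℝ)] : Fin 2 → ℝ)) hg
  have h6 := congrArg (eval (![(0 : ℝ), (1 : ℝ)] : Fin 2 → ℝ)) hg
  have h7 := congrArg (eval (![(1 : ℝ), (1 : ℝ)] : Fin 2 → ℝ)) hg
  have h8 := congrArg (eval (![(0 : ℝ), (0 : ℝ)] : Fin 2 → ℝ)) hg
  have h9 := congrArg (eval (![(1 : ℝ), (3 : ℝ)] : Fin 2 → ℝ)) hg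
  simp only [S₁, S₂, S₃, N₁₁, N₁₂, N₂₁, N₂₂, N₃₁, N₃₂, smul_eval, map_add, map_sub, map_mul, map_pow, map_ofNat, map_one, map_zero, eval_C, eval_X, Matrix.cons_val_zero, Matrix.cons_val_one, Matrix.head_cons] at h0
  norm_num at h0
  simp only [S₁, S₂, S₃, N₁₁, N₁₂, N₂₁, N₂₂, N₃₁, N₃₂, smul_eval, map_add, map_sub, map_mul, map_pow, map_ofNat, map_one, map_zero, eval_C, eval_X, Matrix.cons_val_zero, Matrix.cons_val_one, Matrix.head_cons] at h1
  norm_num at h1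
  simp only [S₁, S₂, S₃, N₁₁, N₁₂, N₂₁, N₂₂, N₃₁, N₃₂, smul_eval, map_add, map_sub, map_mul, map_pow, map_ofNat, map_one, map_zero, eval_C, eval_X, Matrix.cons_val_zero, Matrix.cons_val_one, Matrix.head_cons] at h2
  norm_num at h2
  simp only [S₁, S₂, S₃, N₁₁, N₁₂, N₂₁, N₂₂, N₃₁, N₃₂, smul_eval, map_add, map_sub, map_mul, map_pow, map_ofNat, map_one, map_zero, eval_C, eval_X, Matrix.cons_val_zero, Matrix.cons_val_one, Matrix.head_cons] at h3
  norm_num at h3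
  simp only [S₁, S₂, S₃, N₁₁, N₁₂, N₂₁, N₂₂, N₃₁, N₃₂, smul_eval, map_add, map_sub, map_mul, map_pow, map_ofNat, map_one, map_zero, eval_C, eval_X, Matrix.cons_val_zero, Matrix.cons_val_one, Matrix.head_cons] at h4
  norm_num at h4
  simp only [S₁, S₂, S₃, N₁₁, N₁₂, N₂₁, N₂₂, N₃₁, N₃₂, smul_eval, map_add, map_sub, map_mul, map_pow, map_ofNat, map_one, map_zero, eval_C, eval_X, Matrix.cons_val_zero, Matrix.cons_val_one, Matrix.head_cons] at h5
  norm_num at h5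
  simp only [S₁, S₂, S₃, N₁₁, N₁₂, N₂₁, N₂₂, N₃₁, N₃₂, smul_eval, map_add, map_sub, map_mul, map_pow, map_ofNat, map_one, map_zero, eval_C, eval_X, Matrix.cons_val_zero, Matrix.cons_val_one, Matrix.head_cons] at h6
  norm_num at h6
  simp only [S₁, S₂, S₃, N₁₁, N₁₂, N₂₁, N₂₂, N₃₁, N₃₂, smul_eval, map_add, map_sub, map_mul, map_pow, map_ofNat, map_one, map_zero, eval_C, eval_X, Matrix.cons_val_zero, Matrix.cons_val_one, Matrix.head_cons] at h7
  norm_num at h7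
  simp only [S₁, S₂, S₃, N₁₁, N₁₂, N₂₁, N₂₂, N₃₁, N₃₂, smul_eval, map_add, map_sub, map_mul, map_pow, map_ofNat, map_one, map_zero, eval_C, eval_X, Matrix.cons_val_zero, Matrix.cons_val_one, Matrix.head_cons] at h8
  norm_num at h8
  simp only [S₁, S₂, S₃, N₁₁, N₁₂, N₂₁, N₂₂, N₃₁, N₃₂, smul_eval, map_add, map_sub, map_mul, map_pow, map_ofNat, map_one, map_zero, eval_C, eval_X, Matrix.cons_val_zero, Matrix.cons_val_one, Matrix.head_cons] at h9
  norm_num at h9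
  have e0 : g 0 = 0 := by linarith
  have e1 : g 1 = 0 := by linarith
  have e2 : g 2 = 0 := by linarith
  have e3 : g 3 = 0 := by linarith
  have e4 : g 4 = 0 := by linarith
  have e5 : g 5 = 0 := by linarith
  have e6 : g 6 = 0 := by linarith
  have e7 : g 7 = 0 := by linarith
  have e8 : g 8 = 0 := by linarith
  have e9 : g 9 = 0 := by linarith
  intro i
  fin_cases i
  exacts [e0, e1, e2, e3, e4, e5, e6, e7, e8, e9]

lemma span_le_rtd : Submodule.span ℝ (Set.range tenFunctions) ≤ restrictTotalDegree (Fin 2) ℝ 3 := by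
  rw [Submodule.span_le]
  rintro q ⟨i, rfl⟩
  fin_cases i
  exacts [rtd0, rtd1, rtd2, rtd3, rtd4, rtd5, rtd6, rtd7, rtd8, rtd9]

lemma rtd_le_span : restrictTotalDegree (Fin 2) ℝ 3 ≤ Submodule.span ℝ (Set.range tenFunctions) := by
  intro p hp
  have hdeg : ∀ d ∈ p.support, d 0 + d 1 ≤ 3 := by
    intro d hd
    have h1 : (d.sum fun _ e => e) ≤ 3 :=
      le_trans (Finset.le_sup (f := fun s : Fin 2 →₀ ℕ => s.sum fun _ e => e) hd) ((mem_restrictTotalDegree _ _ p).mp hp)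
    rw [Finsupp.sum_fintype _ _ (fun i => rfl), Fin.sum_univ_two] at h1
    exact h1
  rw [as_sum p]
  refine Submodule.sum_mem _ fun d hd => ?_
  have h2 := hdeg d hd
  have h3 : (monomial d (coeff d p) : MvPolynomial (Fin 2) ℝ)
      = (coeff d p) • (x ^ (d 0) * y ^ (d 1)) := by
    rw [monomial_eq, Finsupp.prod_fintype _ _ (fun i => pow_zero _), Fin.prod_univ_two,
      smul_eq_C_mul]
  rw [h3]
  refine Submodule.smul_mem _ _ ?_
  revert h2
  generalize d 0 = a
  generalize d 1 = b
  intro h2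
  have ha : a ≤ 3 := le_trans (Nat.le_add_right _ _) h2
  have hb : b ≤ 3 := le_trans (Nat.le_add_left _ _) h2
  interval_cases a <;> interval_cases b <;>
    first | exact memM0 | exact memM1 | exact memM2 | exact memM3 | exact memM4 | exact memM5 | exact memM6 | exact memM7 | exact memM8 | exact memM9 | (exfalso; omega)

/-- The 3 sting functions, 6 non-sting functions and the constant 1 form a basis of the
    10-dimensional space of bivariate polynomials of total degree ≤ 3. -/
theorem stmt5 :
    LinearIndependent ℝ tenFunctions ∧
      Submodule.span ℝ (Set.range tenFunctions) = restrictTotalDegree (Fin 2) ℝ 3 := by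
  exact ⟨indep, le_antisymm span_le_rtd rtd_le_span⟩

end
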